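/- arXiv:0904.0707 — 2 statements merged into one kernel-verified Lean document; each statement's English description precedes it below -/
import Mathlib

section
/- Strict separation of obstacles at a maximum point: let u_1,…,u_m be a viscosity subsolution and w_1,…,w_m a viscosity supersolution of the system min{v_i(x) − max_{j≠i}(−g_{ij}(x)+v_j(x)), r v_i(x) − A v_i(x) − ψ_i(x)} = 0 on a ball B_R, with costs g_{ij} ≥ α > 0. Let Φ^i_ε(x,y) = u_i(x) − (1−λ)w_i(y) − (1/2ε)|x−y|^{2γ} − θ(|x−x_0|^{2γ+2} + |y−x_0|^{2γ+2}) and let (x_ε, y_ε, i_ε) maximize Φ^i_ε over B_R × B_R × {1,…,m}. Then for ε small (depending on λ, θ and the uniform continuity modulus of the g_{ij} on B_R), u_{i_ε}(x_ε) − max_{j≠i_ε}(−g_{i_ε j}(x_ε) + u_j(x_ε)) > 0. -/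
open Filter Topology Set

variable {k : ℕ}

/-- Quadratic form of a `k×k` matrix on `ℝ^k`. -/
noncomputable def quadForm (A : Matrix (Fin k) (Fin k) ℝ) (z : EuclideanSpace ℝ (Fin k)) : ℝ :=
  ∑ i, ∑ j, A i j * z i * z j

/-- `(q, A)` belongs to the second-order subjet `J^{2,-} v(x)`. -/
def InSubjet (v : EuclideanSpace ℝ (Fin k) → ℝ) (x q : EuclideanSpace ℝ (Fin k))
    (A : Matrix (Fin k) (Fin k) ℝ) : Prop :=
  ∀ ε > (0:ℝ), ∀ᶠ y in 𝓝 x,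
    v x + (∑ i, q i * (y - x) i) + (1 / 2) * quadForm A (y - x) - ε * ‖y - x‖ ^ 2 ≤ v y

/-- `(q, A)` belongs to the second-order superjet `J^{2,+} v(x)`. -/
def InSuperjet (v : EuclideanSpace ℝ (Fin k) → ℝ) (x q : EuclideanSpace ℝ (Fin k))
    (A : Matrix (Fin k) (Fin k) ℝ) : Prop :=
  ∀ ε > (0:ℝ), ∀ᶠ y in 𝓝 x,
    v y ≤ v x + (∑ i, q i * (y - x) i) + (1 / 2) * quadForm A (y - x) + ε * ‖y - x‖ ^ 2

/-- Viscosity supersolution of the system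
`min{v_i − max_{j≠i}(−g_{ij} + v_j), G_i(x, v_i, Dv_i, D²v_i)} = 0` on a set `S`, where
`G i x v q A` stands for `r v_i(x) − A v_i(x) − ψ_i(x)` evaluated on jets. -/
def SystemSupersolution {m : ℕ}
    (G : Fin m → EuclideanSpace ℝ (Fin k) → ℝ → EuclideanSpace ℝ (Fin k) →
      Matrix (Fin k) (Fin k) ℝ → ℝ)
    (g : Fin m → Fin m → EuclideanSpace ℝ (Fin k) → ℝ)
    (v : Fin m → EuclideanSpace ℝ (Fin k) → ℝ) (S : Set (EuclideanSpace ℝ (Fin k))) : Prop :=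
  ∀ i : Fin m, ∀ x ∈ S, ∀ q A, InSubjet (v i) x q A →
    0 ≤ min (v i x - ⨆ j : {j : Fin m // j ≠ i}, (-(g i j x) + v j x)) (G i x (v i x) q A)

/-- Viscosity subsolution of the same system on a set `S`. -/
def SystemSubsolution {m : ℕ}
    (G : Fin m → EuclideanSpace ℝ (Fin k) → ℝ → EuclideanSpace ℝ (Fin k) →
      Matrix (Fin k) (Fin k) ℝ → ℝ)
    (g : Fin m → Fin m → EuclideanSpace ℝ (Fin k) → ℝ)
    (v : Fin m → EuclideanSpace ℝ (Fin k) → ℝ) (S : Set (EuclideanSpace ℝ (Fin k))) : Prop :=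
  ∀ i : Fin m, ∀ x ∈ S, ∀ q A, InSuperjet (v i) x q A →
    min (v i x - ⨆ j : {j : Fin m // j ≠ i}, (-(g i j x) + v j x)) (G i x (v i x) q A) ≤ 0

/-! The supersolution satisfies the obstacle inequality `w_i ≥ -g_ij + w_j` wherever `w_i` has a
subjet; such points are dense, since `w_i + C‖· - c‖²` attains its minimum over a small ball inside
it once `C` is large, so by continuity the inequality holds on the whole ball. Comparing
`Φ^{i_ε}_ε(x_ε, y_ε)` with `Φ^{i_ε}_ε(y_ε, y_ε)` gives `‖x_ε - y_ε‖^{2γ} = O(ε)`, so for small `ε`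
the costs at `x_ε` and `y_ε` differ by less than `λα`. If the obstacle at `x_ε` were active through
some `k`, maximality of `i_ε` over `k` and the obstacle inequality of `w` at `y_ε` would give
`u_{i_ε}(x_ε) - u_k(x_ε) ≥ -(1-λ) g_{i_ε k}(y_ε) > -g_{i_ε k}(x_ε)`. -/

open Metric

lemma quadForm_diagonal (d : Fin k → ℝ) (z : EuclideanSpace ℝ (Fin k)) :
    quadForm (Matrix.diagonal d) z = ∑ i, d i * z i ^ 2 := by
  refine Finset.sum_congr rfl fun i _ => ?_
  rw [Finset.sum_eq_single i (fun j _ hj => by simp [Matrix.diagonal_apply_ne _ hj.symm])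
    (by simp)]
  simp only [Matrix.diagonal_apply_eq]
  ring

section Subjet

variable {v : EuclideanSpace ℝ (Fin k) → ℝ}

lemma inSubjet_of_isLocalMin_add_sq {c y : EuclideanSpace ℝ (Fin k)} {C : ℝ}
    (h : IsLocalMin (fun z => v z + C * ‖z - c‖ ^ 2) y) :
    InSubjet v y ((-(2 * C)) • (y - c)) (Matrix.diagonal fun _ => -(2 * C)) := by
  intro ε hε
  filter_upwards [h] with z hz
  have expand : (∑ i, ((-(2 * C)) • (y - c)) i * (z - y) i)
      + 1 / 2 * quadForm (Matrix.diagonal fun _ => -(2 * C)) (z - y)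
      = C * ‖y - c‖ ^ 2 - C * ‖z - c‖ ^ 2 := by
    simp only [quadForm_diagonal, EuclideanSpace.real_norm_sq_eq, Finset.mul_sum,
      ← Finset.sum_add_distrib, ← Finset.sum_sub_distrib, PiLp.smul_apply, PiLp.sub_apply,
      smul_eq_mul]
    exact Finset.sum_congr rfl fun i _ => by ring
  have : 0 ≤ ε * ‖z - y‖ ^ 2 := by positivity
  linarith

lemma exists_inSubjet_mem_ball {c : EuclideanSpace ℝ (Fin k)} {r : ℝ} (hr : 0 < r)
    (hv : ContinuousOn v (closedBall c r)) : ∃ y ∈ ball c r, ∃ q A, InSubjet v y q A := by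
  obtain ⟨M, hM⟩ := (isCompact_closedBall c r).exists_bound_of_continuousOn hv
  have hc : c ∈ closedBall c r := mem_closedBall_self hr.le
  set C := (2 * M + 1) / r ^ 2
  obtain ⟨y, hy, hmin⟩ := (isCompact_closedBall c r).exists_isMinOn ⟨c, hc⟩
    (hv.add (by fun_prop : Continuous fun z => C * ‖z - c‖ ^ 2).continuousOn)
  -- the penalty `C r²` exceeds the oscillation `2M` of `v`, so the minimum is not on the sphere
  have hy_ball : y ∈ ball c r := by
    rw [mem_ball, dist_eq_norm]
    by_contra! hge
    have hmin_c : v y + C * ‖y - c‖ ^ 2 ≤ v c := by simpa using hmin hc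
    have hMy := abs_le.1 (hM y hy)
    have hMc := abs_le.1 (hM c hc)
    have hC : C * r ^ 2 = 2 * M + 1 := div_mul_cancel₀ _ (by positivity)
    have : C * r ^ 2 ≤ C * ‖y - c‖ ^ 2 := by
      gcongr
      exact div_nonneg (by linarith) (by positivity)
    linarith
  exact ⟨y, hy_ball, _, _, inSubjet_of_isLocalMin_add_sq
    (hmin.isLocalMin (closedBall_mem_nhds_of_mem hy_ball))⟩

lemma subset_closure_setOf_inSubjet {U : Set (EuclideanSpace ℝ (Fin k))} (hU : IsOpen U)
    (hv : ContinuousOn v U) : U ⊆ closure {y ∈ U | ∃ q A, InSubjet v y q A} := by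
  intro x hx
  rw [Metric.mem_closure_iff]
  intro ε hε
  obtain ⟨r, hr, hrU⟩ := Metric.isOpen_iff.1 hU x hx
  have hρ : 0 < min r ε / 2 := by positivity
  have hρU : closedBall x (min r ε / 2) ⊆ U :=
    (closedBall_subset_ball (by linarith [min_le_left r ε])).trans hrU
  obtain ⟨y, hy, hjet⟩ := exists_inSubjet_mem_ball hρ (hv.mono hρU)
  refine ⟨y, ⟨hρU (ball_subset_closedBall hy), hjet⟩, ?_⟩
  rw [dist_comm]
  linarith [mem_ball.1 hy, min_le_right r ε]

lemma closedBall_subset_closure_setOf_inSubjet {c : EuclideanSpace ℝ (Fin k)} {r : ℝ}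
    (hr : 0 < r) (hv : ContinuousOn v (closedBall c r)) :
    closedBall c r ⊆ closure {y ∈ ball c r | ∃ q A, InSubjet v y q A} := by
  rw [← closure_ball c hr.ne']
  exact closure_minimal (subset_closure_setOf_inSubjet isOpen_ball
    (hv.mono ball_subset_closedBall)) isClosed_closure

end Subjet

lemma SystemSupersolution.obstacle_le {m : ℕ}
    {G : Fin m → EuclideanSpace ℝ (Fin k) → ℝ → EuclideanSpace ℝ (Fin k) →
      Matrix (Fin k) (Fin k) ℝ → ℝ}
    {g : Fin m → Fin m → EuclideanSpace ℝ (Fin k) → ℝ} {w : Fin m → EuclideanSpace ℝ (Fin k) → ℝ}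
    {c : EuclideanSpace ℝ (Fin k)} {r : ℝ} (hr : 0 < r)
    (hsup : SystemSupersolution G g w (closedBall c r)) {i j : Fin m} (hij : j ≠ i)
    (hg : ContinuousOn (g i j) (closedBall c r)) (hwi : ContinuousOn (w i) (closedBall c r))
    (hwj : ContinuousOn (w j) (closedBall c r)) {y : EuclideanSpace ℝ (Fin k)}
    (hy : y ∈ closedBall c r) : -g i j y + w j y ≤ w i y := by
  have hclosure : closure {z ∈ ball c r | ∃ q A, InSubjet (w i) z q A} ⊆ closedBall c r :=
    closure_minimal (fun z hz => ball_subset_closedBall hz.1) isClosed_closedBall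
  refine le_on_closure (fun z hz => ?_) ((hg.neg.add hwj).mono hclosure)
    (hwi.mono hclosure) (closedBall_subset_closure_setOf_inSubjet hr hwi hy)
  obtain ⟨hz, q, A, hjet⟩ := hz
  have hobst := (hsup i z (ball_subset_closedBall hz) q A hjet).trans (min_le_left _ _)
  have hj := le_ciSup (f := fun j : {j // j ≠ i} => -g i j z + w j z)
    (Set.finite_range _).bddAbove ⟨j, hij⟩
  show -g i j z + w j z ≤ w i z
  linarith

section Doubling

variable {ι E : Type*} [SeminormedAddCommGroup E] (u w : ι → E → ℝ) (lam θ γ ε : ℝ) (x0 : E)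

/-- The paper's `Φ^i_ε(x, y)`. -/
noncomputable def doublingFun (i : ι) (x y : E) : ℝ :=
  u i x - (1 - lam) * w i y - (1 / (2 * ε)) * ‖x - y‖ ^ (2 * γ)
    - θ * (‖x - x0‖ ^ (2 * γ + 2) + ‖y - x0‖ ^ (2 * γ + 2))

variable {u w lam θ γ ε x0}

lemma norm_sub_lt_of_doublingFun_le {i : ι} {x y : E} {M D δ : ℝ} (hθ : 0 ≤ θ) (hγ : 0 < γ)
    (hε : 0 < ε) (hδ : 0 < δ) (hux : ‖u i x‖ ≤ M) (huy : ‖u i y‖ ≤ M) (hyx0 : ‖y - x0‖ ≤ D)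
    (hεδ : ε ≤ δ ^ (2 * γ) / (2 * (2 * M + θ * D ^ (2 * γ + 2)) + 1))
    (h : doublingFun u w lam θ γ ε x0 i y y ≤ doublingFun u w lam θ γ ε x0 i x y) :
    ‖x - y‖ < δ := by
  set K := 2 * M + θ * D ^ (2 * γ + 2)
  have hM : 0 ≤ M := (norm_nonneg _).trans hux
  have hD : 0 ≤ D := (norm_nonneg _).trans hyx0
  have hK : 0 ≤ K := by positivity
  have penalty : (1 / (2 * ε)) * ‖x - y‖ ^ (2 * γ) ≤ K := by
    unfold doublingFun at h
    rw [sub_self, norm_zero, Real.zero_rpow (by positivity)] at h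
    have : 0 ≤ θ * ‖x - x0‖ ^ (2 * γ + 2) := by positivity
    have := mul_le_mul_of_nonneg_left
      (Real.rpow_le_rpow (norm_nonneg _) hyx0 (by linarith : (0:ℝ) ≤ 2 * γ + 2)) hθ
    linarith [abs_le.1 ((Real.norm_eq_abs _).symm.trans_le hux),
      abs_le.1 ((Real.norm_eq_abs _).symm.trans_le huy)]
  rw [one_div, inv_mul_le_iff₀ (by positivity)] at penalty
  rw [← Real.rpow_lt_rpow_iff (z := 2 * γ) (norm_nonneg _) hδ.le (by positivity)]
  calc ‖x - y‖ ^ (2 * γ) ≤ 2 * ε * K := penalty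
    _ ≤ 2 * (δ ^ (2 * γ) / (2 * K + 1)) * K := by gcongr
    _ < δ ^ (2 * γ) := by
      rw [mul_comm 2, mul_assoc, div_mul_eq_mul_div, div_lt_iff₀ (by positivity)]
      nlinarith [Real.rpow_pos_of_pos hδ (2 * γ)]

lemma obstacle_lt_of_doublingFun_le {g : ι → ι → E → ℝ} {i j : ι} {x y : E} (hlam : lam ≤ 1)
    (hmax : doublingFun u w lam θ γ ε x0 j x y ≤ doublingFun u w lam θ γ ε x0 i x y)
    (hobst : -g i j y + w j y ≤ w i y) (hg : |g i j x - g i j y| < lam * g i j y) :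
    -g i j x + u j x < u i x := by
  unfold doublingFun at hmax
  have := mul_le_mul_of_nonneg_left hobst (sub_nonneg.2 hlam)
  linarith [le_abs_self (g i j y - g i j x), abs_sub_comm (g i j x) (g i j y)]

end Doubling

lemma IsCompact.exists_forall_norm_le_of_continuousOn {ι X F : Type*} [Fintype ι]
    [TopologicalSpace X] [SeminormedAddCommGroup F] {s : Set X} (hs : IsCompact s)
    {f : ι → X → F} (hf : ∀ i, ContinuousOn (f i) s) :
    ∃ M, 0 ≤ M ∧ ∀ i, ∀ x ∈ s, ‖f i x‖ ≤ M := by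
  obtain ⟨M, hM⟩ := hs.exists_bound_of_continuousOn (continuousOn_pi.2 hf)
  exact ⟨max M 0, le_max_right _ _, fun i x hx =>
    (norm_le_pi_norm (fun i => f i x) i).trans ((hM x hx).trans (le_max_left _ _))⟩

lemma IsCompact.exists_forall_dist_lt_of_continuousOn {ι X Y : Type*} [Fintype ι]
    [PseudoMetricSpace X] [PseudoMetricSpace Y] {s : Set X} (hs : IsCompact s)
    {f : ι → X → Y} (hf : ∀ i, ContinuousOn (f i) s) {η : ℝ} (hη : 0 < η) :
    ∃ δ > 0, ∀ x ∈ s, ∀ y ∈ s, dist x y < δ → ∀ i, dist (f i x) (f i y) < η := by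
  obtain ⟨δ, hδ, hf⟩ := Metric.uniformContinuousOn_iff.1
    (hs.uniformContinuousOn_of_continuous (continuousOn_pi.2 hf)) η hη
  exact ⟨δ, hδ, fun x hx y hy hxy i =>
    (dist_le_pi_dist (fun i => f i x) (fun i => f i y) i).trans_lt (hf x hx y hy hxy)⟩

theorem strict_obstacle_separation_general {m : ℕ} (hm : 1 < m) (R : ℝ) (hR : 0 < R)
    (G : Fin m → EuclideanSpace ℝ (Fin k) → ℝ → EuclideanSpace ℝ (Fin k) →
      Matrix (Fin k) (Fin k) ℝ → ℝ)
    (g : Fin m → Fin m → EuclideanSpace ℝ (Fin k) → ℝ)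
    (hgc : ∀ i j, ContinuousOn (g i j) (Metric.closedBall 0 R))
    (α : ℝ) (hα : 0 < α) (hglb : ∀ i j y, i ≠ j → α ≤ g i j y)
    (u w : Fin m → EuclideanSpace ℝ (Fin k) → ℝ)
    (hu : ∀ i, ContinuousOn (u i) (Metric.closedBall 0 R))
    (hw : ∀ i, ContinuousOn (w i) (Metric.closedBall 0 R))
    (hsup : SystemSupersolution G g w (Metric.closedBall 0 R))
    (lam θ γ : ℝ) (hlam : lam ∈ Set.Ioo (0:ℝ) 1) (hθ : θ ∈ Set.Ioo (0:ℝ) 1) (hγ : 1 ≤ γ)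
    (x0 : EuclideanSpace ℝ (Fin k))
    (xe ye : ℝ → EuclideanSpace ℝ (Fin k)) (ie : ℝ → Fin m)
    (hmem : ∀ ε > (0:ℝ), xe ε ∈ Metric.closedBall 0 R ∧ ye ε ∈ Metric.closedBall 0 R)
    (hmax : ∀ ε > (0:ℝ), ∀ i : Fin m,
      ∀ x ∈ Metric.closedBall (0 : EuclideanSpace ℝ (Fin k)) R,
      ∀ y ∈ Metric.closedBall (0 : EuclideanSpace ℝ (Fin k)) R,
        u i x - (1 - lam) * w i y - (1 / (2 * ε)) * ‖x - y‖ ^ (2 * γ)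
            - θ * (‖x - x0‖ ^ (2 * γ + 2) + ‖y - x0‖ ^ (2 * γ + 2))
          ≤ u (ie ε) (xe ε) - (1 - lam) * w (ie ε) (ye ε)
            - (1 / (2 * ε)) * ‖xe ε - ye ε‖ ^ (2 * γ)
            - θ * (‖xe ε - x0‖ ^ (2 * γ + 2) + ‖ye ε - x0‖ ^ (2 * γ + 2))) :
    ∃ ε0 > (0:ℝ), ∀ ε, 0 < ε → ε ≤ ε0 →
      0 < u (ie ε) (xe ε) -
        ⨆ j : {j : Fin m // j ≠ ie ε}, (-(g (ie ε) j (xe ε)) + u j (xe ε)) := by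
  have hball := isCompact_closedBall (0 : EuclideanSpace ℝ (Fin k)) R
  obtain ⟨M, hM0, hM⟩ := hball.exists_forall_norm_le_of_continuousOn hu
  obtain ⟨δ, hδ, hgδ⟩ := hball.exists_forall_dist_lt_of_continuousOn
    (f := fun p : Fin m × Fin m => g p.1 p.2) (fun p => hgc p.1 p.2) (mul_pos hlam.1 hα)
  have hθ0 := hθ.1.le
  refine ⟨δ ^ (2 * γ) / (2 * (2 * M + θ * (R + ‖x0‖) ^ (2 * γ + 2)) + 1), by positivity,
    fun ε hε hεε0 => ?_⟩
  obtain ⟨hx, hy⟩ := hmem ε hε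
  have hyx0 : ‖ye ε - x0‖ ≤ R + ‖x0‖ :=
    (norm_sub_le _ _).trans (add_le_add_left (by simpa using hy) _)
  have hxy : ‖xe ε - ye ε‖ < δ := norm_sub_lt_of_doublingFun_le hθ0 (by linarith) hε hδ
    (hM _ _ hx) (hM _ _ hy) hyx0 hεε0 (hmax ε hε _ _ hy _ hy)
  have : Nontrivial (Fin m) := Fin.nontrivial_iff_two_le.2 hm
  have : Nonempty {j : Fin m // j ≠ ie ε} := nonempty_subtype.2 (exists_ne _)
  obtain ⟨j, hj⟩ := exists_eq_ciSup_of_finite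
    (f := fun j : {j : Fin m // j ≠ ie ε} => -(g (ie ε) j (xe ε)) + u j (xe ε))
  rw [← hj, sub_pos]
  refine obstacle_lt_of_doublingFun_le hlam.2.le (hmax ε hε j _ hx _ hy)
    (hsup.obstacle_le hR j.2 (hgc _ _) (hw _) (hw _) hy) ?_
  calc |g (ie ε) j (xe ε) - g (ie ε) j (ye ε)| < lam * α :=
        (Real.dist_eq _ _).symm.trans_lt (hgδ _ hx _ hy (by rwa [dist_eq_norm]) (ie ε, j))
    _ ≤ lam * g (ie ε) j (ye ε) := mul_le_mul_of_nonneg_left (hglb _ _ _ j.2.symm) hlam.1.le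

/-- Strict separation of obstacles at the maximum point of the doubled function: for the
maximizers `(x_ε, y_ε, i_ε)` of `Φ^i_ε` and `ε` small enough,
`u_{i_ε}(x_ε) − max_{j≠i_ε}(−g_{i_ε j}(x_ε) + u_j(x_ε)) > 0`. -/
theorem strict_obstacle_separation {m : ℕ} (hm : 1 < m) (R : ℝ) (hR : 0 < R)
    (G : Fin m → EuclideanSpace ℝ (Fin k) → ℝ → EuclideanSpace ℝ (Fin k) →
      Matrix (Fin k) (Fin k) ℝ → ℝ)
    (g : Fin m → Fin m → EuclideanSpace ℝ (Fin k) → ℝ)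
    (hgc : ∀ i j, ContinuousOn (g i j) (Metric.closedBall 0 R))
    (α : ℝ) (hα : 0 < α) (hglb : ∀ i j y, i ≠ j → α ≤ g i j y)
    (u w : Fin m → EuclideanSpace ℝ (Fin k) → ℝ)
    (hu : ∀ i, ContinuousOn (u i) (Metric.closedBall 0 R))
    (hw : ∀ i, ContinuousOn (w i) (Metric.closedBall 0 R))
    (hsub : SystemSubsolution G g u (Metric.closedBall 0 R))
    (hsup : SystemSupersolution G g w (Metric.closedBall 0 R))
    (lam θ γ : ℝ) (hlam : lam ∈ Set.Ioo (0:ℝ) 1) (hθ : θ ∈ Set.Ioo (0:ℝ) 1) (hγ : 1 ≤ γ)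
    (x0 : EuclideanSpace ℝ (Fin k)) (hx0 : x0 ∈ Metric.closedBall 0 R)
    (xe ye : ℝ → EuclideanSpace ℝ (Fin k)) (ie : ℝ → Fin m)
    (hmem : ∀ ε > (0:ℝ), xe ε ∈ Metric.closedBall 0 R ∧ ye ε ∈ Metric.closedBall 0 R)
    (hmax : ∀ ε > (0:ℝ), ∀ i : Fin m,
      ∀ x ∈ Metric.closedBall (0 : EuclideanSpace ℝ (Fin k)) R,
      ∀ y ∈ Metric.closedBall (0 : EuclideanSpace ℝ (Fin k)) R,
        u i x - (1 - lam) * w i y - (1 / (2 * ε)) * ‖x - y‖ ^ (2 * γ)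
            - θ * (‖x - x0‖ ^ (2 * γ + 2) + ‖y - x0‖ ^ (2 * γ + 2))
          ≤ u (ie ε) (xe ε) - (1 - lam) * w (ie ε) (ye ε)
            - (1 / (2 * ε)) * ‖xe ε - ye ε‖ ^ (2 * γ)
            - θ * (‖xe ε - x0‖ ^ (2 * γ + 2) + ‖ye ε - x0‖ ^ (2 * γ + 2))) :
    ∃ ε0 > (0:ℝ), ∀ ε, 0 < ε → ε ≤ ε0 →
      0 < u (ie ε) (xe ε) -
        ⨆ j : {j : Fin m // j ≠ ie ε}, (-(g (ie ε) j (xe ε)) + u j (xe ε)) :=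
  strict_obstacle_separation_general hm R hR G g hgc α hα hglb u w hu hw hsup lam θ γ hlam hθ hγ x0
    xe ye ie hmem hmax
end

section
/- Stability of viscosity subsolutions under monotone uniform limits for the obstacle problem: let u_n be continuous viscosity solutions of A u_n(x) + f(x) + n(u_n(x) − h(x))^- − r u_n(x) = 0 on ℝ^k (with A a linear second-order elliptic operator with continuous coefficients), and suppose u_n ↑ u locally uniformly with u continuous. Then u is a viscosity solution of min{u(x) − h(x), r u(x) − A u(x) − f(x)} = 0. -/
/-!
Test `u` at `x` against the quadratic polynomial of its jet `(q, H)`, steepened to `H ± ε I` so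
that `u` minus the polynomial has a strict extremum at `x`. By locally uniform convergence,
`uₙ` minus the same polynomial has extrema at points `xₙ → x` with `uₙ xₙ → u x`, and there the
polynomial provides a jet of `uₙ`. Passing to the limit in the penalized inequalities and then
letting `ε → 0` gives the operator part of `min {u - h, r u - A u - f}`. The obstacle part: if
`u x > h x` the penalty vanishes near `x`; in the supersolution inequality the penalty
`n (h - uₙ)⁺` is bounded by a convergent sequence, so `(h - u)⁺ = 0` at `x`.
-/

open Filter Topology Set Matrix

variable {k : ℕ}

/-- Frobenius norm of a real matrix. -/
noncomputable def matNorm {m n : Type*} [Fintype m] [Fintype n] (A : Matrix m n ℝ) : ℝ :=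
  Real.sqrt (∑ i, ∑ j, (A i j) ^ 2)

/-- The second-order elliptic operator
`A u = (1/2)Σ(σσᵀ)_{ij}∂²u/∂x_i∂x_j + Σ b_i ∂u/∂x_i` evaluated on jets `(q, H)`. -/
noncomputable def ellipticOp {d : ℕ}
    (b : EuclideanSpace ℝ (Fin k) → EuclideanSpace ℝ (Fin k))
    (σ : EuclideanSpace ℝ (Fin k) → Matrix (Fin k) (Fin d) ℝ)
    (x q : EuclideanSpace ℝ (Fin k)) (H : Matrix (Fin k) (Fin k) ℝ) : ℝ :=
  (1 / 2) * ((σ x * (σ x)ᵀ) * H).trace + ∑ i, b x i * q i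

local notation "ℝᵏ" => EuclideanSpace ℝ (Fin k)

local notation "ℝᵏˣᵏ" => Matrix (Fin k) (Fin k) ℝ

lemma quadForm_eq_dotProduct (G : ℝᵏˣᵏ) (z : ℝᵏ) :
    quadForm G z = z.ofLp ⬝ᵥ (G *ᵥ z.ofLp) := by
  simp only [quadForm, dotProduct, mulVec, Finset.mul_sum]
  exact Finset.sum_congr rfl fun i _ => Finset.sum_congr rfl fun j _ => by ring

lemma quadForm_add (G : ℝᵏˣᵏ) (z w : ℝᵏ) :
    quadForm G (z + w) = quadForm G z + z.ofLp ⬝ᵥ ((G + Gᵀ) *ᵥ w.ofLp) + quadForm G w := by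
  simp only [quadForm_eq_dotProduct, WithLp.ofLp_add, mulVec_add, add_dotProduct, dotProduct_add,
    add_mulVec, dotProduct_mulVec w.ofLp G, mulVec_transpose, dotProduct_comm z.ofLp (w.ofLp ᵥ* G)]
  ring

lemma quadForm_add_smul_one (H : ℝᵏˣᵏ) (c : ℝ) (z : ℝᵏ) :
    quadForm (H + c • 1) z = quadForm H z + c * ‖z‖ ^ 2 := by
  rw [quadForm_eq_dotProduct, quadForm_eq_dotProduct, add_mulVec, dotProduct_add, smul_mulVec,
    one_mulVec, dotProduct_smul, ← real_inner_self_eq_norm_sq,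
    EuclideanSpace.inner_eq_star_dotProduct, star_trivial, smul_eq_mul]

lemma quadForm_neg (H : ℝᵏˣᵏ) (z : ℝᵏ) : quadForm (-H) z = -quadForm H z := by
  simp [quadForm]

noncomputable def jetPoly (x q : ℝᵏ) (G : ℝᵏˣᵏ) (y : ℝᵏ) : ℝ :=
  ∑ i, q i * (y - x) i + (1 / 2) * quadForm G (y - x)

noncomputable def jetPolyGrad (x q : ℝᵏ) (G : ℝᵏˣᵏ) (p : ℝᵏ) : ℝᵏ :=
  q + WithLp.toLp 2 ((1 / 2 : ℝ) • ((G + Gᵀ) *ᵥ (p - x).ofLp))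

lemma jetPoly_self (x q : ℝᵏ) (G : ℝᵏˣᵏ) : jetPoly x q G x = 0 := by
  simp [jetPoly, quadForm]

lemma continuous_jetPoly (x q : ℝᵏ) (G : ℝᵏˣᵏ) :
    Continuous (jetPoly x q G) := by
  unfold jetPoly quadForm
  fun_prop

lemma continuous_jetPolyGrad (x q : ℝᵏ) (G : ℝᵏˣᵏ) :
    Continuous (jetPolyGrad x q G) := by
  unfold jetPolyGrad
  fun_prop

lemma jetPolyGrad_self (x q : ℝᵏ) (G : ℝᵏˣᵏ) : jetPolyGrad x q G x = q := by
  simp [jetPolyGrad]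

lemma jetPoly_sub_jetPoly (x q : ℝᵏ) (G : ℝᵏˣᵏ) (p y : ℝᵏ) :
    jetPoly x q G y - jetPoly x q G p = jetPoly p (jetPolyGrad x q G p) G y := by
  have hy : y - x = (y - p) + (p - x) := by abel
  simp only [jetPoly, jetPolyGrad, hy, quadForm_add, PiLp.add_apply, Finset.sum_add_distrib,
    add_mul, mul_add]
  have half_dot : ∀ v w : Fin k → ℝ, ∑ i, ((1 / 2 : ℝ) • v) i * w i = 1 / 2 * (w ⬝ᵥ v) :=
    fun v w => by
      simp only [dotProduct, Finset.mul_sum, Pi.smul_apply, smul_eq_mul]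
      exact Finset.sum_congr rfl fun i _ => by ring
  rw [half_dot]
  ring

lemma InSuperjet.of_isLocalMax {v : ℝᵏ → ℝ} {x q p : ℝᵏ} {G : ℝᵏˣᵏ}
    (hmax : IsLocalMax (fun y => v y - jetPoly x q G y) p) :
    InSuperjet v p (jetPolyGrad x q G p) G := by
  intro ε hε
  filter_upwards [hmax] with y hy
  have hshift := jetPoly_sub_jetPoly x q G p y
  have hpos : 0 ≤ ε * ‖y - p‖ ^ 2 := by positivity
  simp only [jetPoly] at hy hshift
  linarith

lemma inSubjet_iff_inSuperjet_neg {v : ℝᵏ → ℝ} {x q : ℝᵏ} {A : ℝᵏˣᵏ} :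
    InSubjet v x q A ↔ InSuperjet (-v) x (-q) (-A) := by
  refine forall₂_congr fun ε _ => eventually_congr (Eventually.of_forall fun y => ?_)
  simp only [Pi.neg_apply, PiLp.neg_apply, quadForm_neg, neg_mul, Finset.sum_neg_distrib]
  constructor <;> intro h <;> linarith

lemma tendsto_of_isMaxOn_of_tendstoUniformlyOn {α : Type*} [PseudoMetricSpace α]
    {φs : ℕ → α → ℝ} {φ : α → ℝ} {K : Set α} {x : α} {xs : ℕ → α} {ε : ℝ} (hε : 0 < ε)
    (hx : x ∈ K) (hxs : ∀ n, xs n ∈ K) (hmax : ∀ n, IsMaxOn (φs n) K (xs n))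
    (hconv : TendstoUniformlyOn φs φ atTop K) (hsep : ∀ y ∈ K, φ y ≤ φ x - ε * dist y x ^ 2) :
    Tendsto xs atTop (𝓝 x) ∧ Tendsto (fun n => φs n (xs n)) atTop (𝓝 (φ x)) := by
  have hclose : ∀ δ > 0, ∀ᶠ n in atTop,
      ε * dist (xs n) x ^ 2 < 2 * δ ∧ |φs n (xs n) - φ x| < δ := by
    intro δ hδ
    filter_upwards [Metric.tendstoUniformlyOn_iff.mp hconv δ hδ] with n hn
    have hnx := hn x hx
    have hnxs := hn (xs n) (hxs n)
    have hle : φs n x ≤ φs n (xs n) := hmax n hx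
    have hsepn := hsep (xs n) (hxs n)
    rw [Real.dist_eq, abs_lt] at hnx hnxs
    refine ⟨by linarith, abs_lt.mpr ⟨by linarith, by nlinarith [sq_nonneg (dist (xs n) x)]⟩⟩
  constructor
  · refine Metric.tendsto_nhds.2 fun η hη => ?_
    filter_upwards [hclose (ε * η ^ 2 / 2) (by positivity)] with n hn
    exact lt_of_pow_lt_pow_left₀ 2 hη.le (lt_of_mul_lt_mul_left (by linarith [hn.1]) hε.le)
  · refine Metric.tendsto_nhds.2 fun η hη => ?_
    filter_upwards [hclose η hη] with n hn
    exact hn.2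

/-- An `ε`-perturbed form of the stability lemma of Crandall–Ishii–Lions (Lemma 6.1). -/
theorem InSuperjet.exists_tendsto {vs : ℕ → ℝᵏ → ℝ} {v : ℝᵏ → ℝ} {x q : ℝᵏ} {H : ℝᵏˣᵏ} {ε : ℝ}
    (hjet : InSuperjet v x q H) (hvs : ∀ n, Continuous (vs n))
    (hconv : TendstoLocallyUniformly vs v atTop) (hε : 0 < ε) :
    ∃ xs qs : ℕ → ℝᵏ, Tendsto xs atTop (𝓝 x) ∧ Tendsto qs atTop (𝓝 q) ∧
      Tendsto (fun n => vs n (xs n)) atTop (𝓝 (v x)) ∧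
      ∀ᶠ n in atTop, InSuperjet (vs n) (xs n) (qs n) (H + ε • 1) := by
  set G := H + ε • (1 : ℝᵏˣᵏ)
  obtain ⟨ρ, hρ, hρjet⟩ := Metric.eventually_nhds_iff.mp (hjet (ε / 4) (by positivity))
  set K := Metric.closedBall x (ρ / 2)
  have hxK : x ∈ K := Metric.mem_closedBall_self (by positivity)
  have hsep : ∀ y ∈ K, v y - jetPoly x q G y ≤ (v x - jetPoly x q G x) - ε / 4 * dist y x ^ 2 := by
    intro y hy
    have hy' := hρjet (lt_of_le_of_lt hy (half_lt_self hρ))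
    rw [jetPoly_self]
    simp only [jetPoly, G, quadForm_add_smul_one, dist_eq_norm] at hy' ⊢
    linarith
  have hconvK : TendstoUniformlyOn (fun n y => vs n y - jetPoly x q G y)
      (fun y => v y - jetPoly x q G y) atTop K := by
    have hK := (tendstoLocallyUniformlyOn_iff_tendstoUniformlyOn_of_compact
      (isCompact_closedBall x (ρ / 2))).mp hconv.tendstoLocallyUniformlyOn
    refine Metric.tendstoUniformlyOn_iff.2 fun δ hδ => ?_
    filter_upwards [Metric.tendstoUniformlyOn_iff.1 hK δ hδ] with n hn y hy
    simpa only [dist_sub_right] using hn y hy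
  have hargmax : ∀ n, ∃ p ∈ K, IsMaxOn (fun y => vs n y - jetPoly x q G y) K p := fun n =>
    (isCompact_closedBall x (ρ / 2)).exists_isMaxOn ⟨x, hxK⟩
      ((hvs n).sub (continuous_jetPoly x q G)).continuousOn
  choose xs hxsK hxsmax using hargmax
  obtain ⟨hxs, hval⟩ :=
    tendsto_of_isMaxOn_of_tendstoUniformlyOn (by positivity) hxK hxsK hxsmax hconvK hsep
  refine ⟨xs, fun n => jetPolyGrad x q G (xs n), hxs, ?_, ?_, ?_⟩
  · exact ((continuous_jetPolyGrad x q G).tendsto' x q (jetPolyGrad_self x q G)).comp hxs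
  · simpa [jetPoly_self] using hval.add (((continuous_jetPoly x q G).tendsto x).comp hxs)
  · filter_upwards [hxs.eventually (Metric.ball_mem_nhds x (half_pos hρ))] with n hn
    exact .of_isLocalMax ((hxsmax n).isLocalMax
      (mem_of_superset (Metric.isOpen_ball.mem_nhds hn) Metric.ball_subset_closedBall))

theorem InSubjet.exists_tendsto {vs : ℕ → ℝᵏ → ℝ} {v : ℝᵏ → ℝ} {x q : ℝᵏ} {H : ℝᵏˣᵏ} {ε : ℝ}
    (hjet : InSubjet v x q H) (hvs : ∀ n, Continuous (vs n))
    (hconv : TendstoLocallyUniformly vs v atTop) (hε : 0 < ε) :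
    ∃ xs qs : ℕ → ℝᵏ, Tendsto xs atTop (𝓝 x) ∧ Tendsto qs atTop (𝓝 q) ∧
      Tendsto (fun n => vs n (xs n)) atTop (𝓝 (v x)) ∧
      ∀ᶠ n in atTop, InSubjet (vs n) (xs n) (qs n) (H - ε • 1) := by
  obtain ⟨xs, qs, hxs, hqs, hval, hjets⟩ := (inSubjet_iff_inSuperjet_neg.mp hjet).exists_tendsto
    (fun n => (hvs n).neg) hconv.neg hε
  refine ⟨xs, fun n => -qs n, hxs, by simpa using hqs.neg, by simpa using hval.neg, ?_⟩
  filter_upwards [hjets] with n hn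
  rw [inSubjet_iff_inSuperjet_neg]
  simpa [neg_add_eq_sub] using hn

lemma nonpos_of_tendsto_of_natCast_mul_le {a b : ℕ → ℝ} {α β : ℝ}
    (ha : Tendsto a atTop (𝓝 α)) (hb : Tendsto b atTop (𝓝 β))
    (hab : ∀ᶠ n : ℕ in atTop, (n : ℝ) * a n ≤ b n) : α ≤ 0 := by
  refine le_of_tendsto_of_tendsto ha (hb.div_atTop tendsto_natCast_atTop_atTop) ?_
  filter_upwards [hab, eventually_gt_atTop 0] with n hn hn0
  rw [le_div_iff₀ (by positivity)]
  linarith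

section Penalization

variable {F : EuclideanSpace ℝ (Fin k) → ℝ → EuclideanSpace ℝ (Fin k) →
    Matrix (Fin k) (Fin k) ℝ → ℝ} {h u : EuclideanSpace ℝ (Fin k) → ℝ}
  {us : ℕ → EuclideanSpace ℝ (Fin k) → ℝ}

lemma tendsto_apply_of_continuous
    (hF : Continuous fun p : ℝᵏ × ℝ × ℝᵏ × ℝᵏˣᵏ => F p.1 p.2.1 p.2.2.1 p.2.2.2)
    {ι : Type*} {l : Filter ι} {xs qs : ι → ℝᵏ} {ts : ι → ℝ} {Hs : ι → ℝᵏˣᵏ} {x q : ℝᵏ} {t : ℝ}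
    {H : ℝᵏˣᵏ} (hx : Tendsto xs l (𝓝 x)) (ht : Tendsto ts l (𝓝 t))
    (hq : Tendsto qs l (𝓝 q)) (hH : Tendsto Hs l (𝓝 H)) :
    Tendsto (fun i => F (xs i) (ts i) (qs i) (Hs i)) l (𝓝 (F x t q H)) :=
  (hF.tendsto (x, t, q, H)).comp (hx.prodMk_nhds (ht.prodMk_nhds (hq.prodMk_nhds hH)))

theorem InSuperjet.min_obstacle_nonpos_of_penalized
    (hF : Continuous fun p : ℝᵏ × ℝ × ℝᵏ × ℝᵏˣᵏ => F p.1 p.2.1 p.2.2.1 p.2.2.2)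
    (hh : Continuous h) (hus : ∀ n, Continuous (us n))
    (hconv : TendstoLocallyUniformly us u atTop)
    (hsub : ∀ (n : ℕ) x q H, InSuperjet (us n) x q H → F x (us n x) q H ≤ n * max (h x - us n x) 0)
    {x q : ℝᵏ} {H : ℝᵏˣᵏ} (hjet : InSuperjet u x q H) :
    min (u x - h x) (F x (u x) q H) ≤ 0 := by
  rcases le_or_gt (u x - h x) 0 with hle | hlt
  · exact min_le_of_left_le hle
  refine min_le_of_right_le ?_
  have hperturbed : ∀ ε : ℝ, 0 < ε → F x (u x) q (H + ε • 1) ≤ 0 := by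
    intro ε hε
    obtain ⟨xs, qs, hxs, hqs, hval, hjets⟩ := hjet.exists_tendsto hus hconv hε
    -- the obstacle is inactive near `x`, so the penalty vanishes
    have hinactive : ∀ᶠ n in atTop, h (xs n) - us n (xs n) < 0 :=
      (((hh.tendsto x).comp hxs).sub hval).eventually_lt_const (by linarith)
    refine le_of_tendsto (tendsto_apply_of_continuous hF hxs hval hqs tendsto_const_nhds) ?_
    filter_upwards [hjets, hinactive] with n hjn hn
    simpa [max_eq_right hn.le] using hsub n _ _ _ hjn
  have hH : Tendsto (fun ε : ℝ => H + ε • 1) (𝓝[>] 0) (𝓝 H) :=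
    (Continuous.tendsto' (by fun_prop) 0 H (by simp)).mono_left nhdsWithin_le_nhds
  exact le_of_tendsto
    (tendsto_apply_of_continuous hF tendsto_const_nhds tendsto_const_nhds tendsto_const_nhds hH)
    (eventually_nhdsWithin_of_forall fun ε hε => hperturbed ε hε)

theorem InSubjet.min_obstacle_nonneg_of_penalized
    (hF : Continuous fun p : ℝᵏ × ℝ × ℝᵏ × ℝᵏˣᵏ => F p.1 p.2.1 p.2.2.1 p.2.2.2)
    (hh : Continuous h) (hus : ∀ n, Continuous (us n))
    (hconv : TendstoLocallyUniformly us u atTop)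
    (hsuper : ∀ (n : ℕ) x q H, InSubjet (us n) x q H → n * max (h x - us n x) 0 ≤ F x (us n x) q H)
    {x q : ℝᵏ} {H : ℝᵏˣᵏ} (hjet : InSubjet u x q H) :
    0 ≤ min (u x - h x) (F x (u x) q H) := by
  have hperturbed : ∀ ε : ℝ, 0 < ε → 0 ≤ F x (u x) q (H - ε • 1) ∧ h x ≤ u x := by
    intro ε hε
    obtain ⟨xs, qs, hxs, hqs, hval, hjets⟩ := hjet.exists_tendsto hus hconv hε
    have hres := tendsto_apply_of_continuous hF hxs hval hqs (tendsto_const_nhds (x := H - ε • 1))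
    have hpen := hjets.mono fun n hjn => hsuper n _ _ _ hjn
    refine ⟨ge_of_tendsto hres (hpen.mono fun n hn => le_trans (by positivity) hn), ?_⟩
    -- the penalty is at most `Fₙ / n → 0`
    have hobst := nonpos_of_tendsto_of_natCast_mul_le
      ((((hh.tendsto x).comp hxs).sub hval).max tendsto_const_nhds) hres hpen
    exact sub_nonpos.1 ((le_max_left _ _).trans hobst)
  have hH : Tendsto (fun ε : ℝ => H - ε • 1) (𝓝[>] 0) (𝓝 H) :=
    (Continuous.tendsto' (by fun_prop) 0 H (by simp)).mono_left nhdsWithin_le_nhds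
  refine le_min (sub_nonneg.2 (hperturbed 1 one_pos).2) ?_
  exact ge_of_tendsto
    (tendsto_apply_of_continuous hF tendsto_const_nhds tendsto_const_nhds tendsto_const_nhds hH)
    (eventually_nhdsWithin_of_forall fun ε hε => (hperturbed ε hε).1)

end Penalization

lemma abs_apply_le_matNorm {m n : Type*} [Fintype m] [Fintype n] (A : Matrix m n ℝ)
    (i : m) (j : n) : |A i j| ≤ matNorm A := by
  rw [matNorm, Real.le_sqrt (abs_nonneg _) (by positivity), sq_abs, ← Fintype.sum_prod_type']
  exact Finset.single_le_sum (f := fun p : m × n => A p.1 p.2 ^ 2) (fun _ _ => sq_nonneg _)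
    (Finset.mem_univ (i, j))

lemma continuous_of_norm_sub_add_matNorm_sub_le {d : ℕ} {b : ℝᵏ → ℝᵏ}
    {σ : ℝᵏ → Matrix (Fin k) (Fin d) ℝ} {C : ℝ}
    (hlip : ∀ x x', ‖b x - b x'‖ + matNorm (σ x - σ x') ≤ C * ‖x - x'‖) :
    Continuous b ∧ Continuous σ := by
  have hmat : ∀ x x', 0 ≤ matNorm (σ x - σ x') := fun _ _ => Real.sqrt_nonneg _
  refine ⟨(LipschitzWith.of_dist_le' (K := C) fun x x' => ?_).continuous,
    continuous_matrix fun i j => (LipschitzWith.of_dist_le' (K := C) fun x x' => ?_).continuous⟩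
  · rw [dist_eq_norm, dist_eq_norm]
    linarith [hlip x x', hmat x x']
  · have hij := abs_apply_le_matNorm (σ x - σ x') i j
    rw [Matrix.sub_apply] at hij
    rw [Real.dist_eq, dist_eq_norm]
    linarith [hlip x x', norm_nonneg (b x - b x')]

theorem penalization_stability_general {d : ℕ}
    (b : EuclideanSpace ℝ (Fin k) → EuclideanSpace ℝ (Fin k))
    (σ : EuclideanSpace ℝ (Fin k) → Matrix (Fin k) (Fin d) ℝ) (C0 : ℝ)
    (hlip : ∀ x x', ‖b x - b x'‖ + matNorm (σ x - σ x') ≤ C0 * ‖x - x'‖)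
    (f h : EuclideanSpace ℝ (Fin k) → ℝ) (hf : Continuous f) (hh : Continuous h)
    (r : ℝ)
    (un : ℕ → EuclideanSpace ℝ (Fin k) → ℝ) (u : EuclideanSpace ℝ (Fin k) → ℝ)
    (hunc : ∀ n, Continuous (un n))
    (hconv : TendstoLocallyUniformly (fun n => un n) u atTop)
    -- each `uₙ` is a viscosity solution of the penalized equation:
    (hsubn : ∀ n : ℕ, ∀ x q H, InSuperjet (un n) x q H →
      0 ≤ ellipticOp b σ x q H + f x + (n : ℝ) * max (h x - un n x) 0 - r * un n x)
    (hsupn : ∀ n : ℕ, ∀ x q H, InSubjet (un n) x q H →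
      ellipticOp b σ x q H + f x + (n : ℝ) * max (h x - un n x) 0 - r * un n x ≤ 0) :
    (∀ x q H, InSuperjet u x q H →
      min (u x - h x) (r * u x - ellipticOp b σ x q H - f x) ≤ 0) ∧
    (∀ x q H, InSubjet u x q H →
      0 ≤ min (u x - h x) (r * u x - ellipticOp b σ x q H - f x)) := by
  obtain ⟨hb, hσ⟩ := continuous_of_norm_sub_add_matNorm_sub_le hlip
  set F := fun x t q H => r * t - ellipticOp b σ x q H - f x
  have hF : Continuous fun p : EuclideanSpace ℝ (Fin k) × ℝ × EuclideanSpace ℝ (Fin k) ×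
      Matrix (Fin k) (Fin k) ℝ => F p.1 p.2.1 p.2.2.1 p.2.2.2 := by
    unfold F ellipticOp
    fun_prop
  exact ⟨fun x q H hjet => hjet.min_obstacle_nonpos_of_penalized hF hh hunc hconv
      fun n y p G hjn => by linarith [hsubn n y p G hjn],
    fun x q H hjet => hjet.min_obstacle_nonneg_of_penalized hF hh hunc hconv
      fun n y p G hjn => by linarith [hsupn n y p G hjn]⟩

/-- Stability of viscosity solutions under monotone locally uniform limits for the obstacle
problem: if `uₙ` are continuous viscosity solutions of
`A uₙ + f + n(uₙ − h)⁻ − r uₙ = 0` and `uₙ ↑ u` locally uniformly with `u` continuous, then `u`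
is a viscosity solution of `min{u − h, ru − Au − f} = 0`. -/
theorem penalization_stability {d : ℕ}
    (b : EuclideanSpace ℝ (Fin k) → EuclideanSpace ℝ (Fin k))
    (σ : EuclideanSpace ℝ (Fin k) → Matrix (Fin k) (Fin d) ℝ) (C0 : ℝ)
    (hgrowth : ∀ x, ‖b x‖ + matNorm (σ x) ≤ C0 * (1 + ‖x‖))
    (hlip : ∀ x x', ‖b x - b x'‖ + matNorm (σ x - σ x') ≤ C0 * ‖x - x'‖)
    (f h : EuclideanSpace ℝ (Fin k) → ℝ) (hf : Continuous f) (hh : Continuous h)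
    (Cf γ : ℝ) (hfg : ∀ y, |f y| ≤ Cf * (1 + ‖y‖ ^ γ))
    (Ch : ℝ) (hhb : ∀ y, |h y| ≤ Ch)
    (r : ℝ) (hr : 0 < r)
    (un : ℕ → EuclideanSpace ℝ (Fin k) → ℝ) (u : EuclideanSpace ℝ (Fin k) → ℝ)
    (hunc : ∀ n, Continuous (un n)) (huc : Continuous u)
    (hmono : ∀ x, Monotone fun n => un n x)
    (hconv : TendstoLocallyUniformly (fun n => un n) u atTop)
    -- each `uₙ` is a viscosity solution of the penalized equation:
    (hsubn : ∀ n : ℕ, ∀ x q H, InSuperjet (un n) x q H →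
      0 ≤ ellipticOp b σ x q H + f x + (n : ℝ) * max (h x - un n x) 0 - r * un n x)
    (hsupn : ∀ n : ℕ, ∀ x q H, InSubjet (un n) x q H →
      ellipticOp b σ x q H + f x + (n : ℝ) * max (h x - un n x) 0 - r * un n x ≤ 0) :
    (∀ x q H, InSuperjet u x q H →
      min (u x - h x) (r * u x - ellipticOp b σ x q H - f x) ≤ 0) ∧
    (∀ x q H, InSubjet u x q H →
      0 ≤ min (u x - h x) (r * u x - ellipticOp b σ x q H - f x)) :=
  penalization_stability_general b σ C0 hlip f h hf hh r un u hunc hconv hsubn hsupn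
end
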